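/- Let Q be a finite bipartite quiver with Q₀ = L ⊔ R and let F be a Q-shaped diagram of posets, i.e. F assigns to each vertex v a partially ordered set F(v) (regarded as a category) and to each arrow α : l → r a monotone map F(α) : F(l) → F(r). Then every Hom-set of the contravariant Grothendieck construction ∫_contra F has at most one element (equivalently, ∫_contra F is a poset) if and only if for every pair of distinct parallel arrows α, β : l → r in Q and every element x ∈ F(l), the elements F(α)(x) and F(β)(x) have no common lower bound in F(r). -/

import Mathlib

/-!
STATEMENT 12: For a finite bipartite quiver `Q` with `Q₀ = L ⊔ R` and a `Q`-shaped diagram `F`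
of posets, every Hom-set of the contravariant Grothendieck construction `∫_contra F` has at
most one element if and only if for every pair of distinct parallel arrows `α, β : l → r` of
`Q` and every `x ∈ F(l)`, the elements `F(α)(x)` and `F(β)(x)` have no common lower bound in
`F(r)`.
-/

open CategoryTheory

universe u

namespace BGP

variable {L R : Type u}

/-- The vertex set of the bipartite quiver, tagged with the arrow data. -/
def BipVert (_Arr : L → R → Type u) : Type u := L ⊕ R

/-- Hom types of the bipartite quiver: all arrows go from `L` to `R`. -/
def bipHom (Arr : L → R → Type u) : L ⊕ R → L ⊕ R → Type u
  | Sum.inl l, Sum.inr r => Arr l r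
  | _, _ => PEmpty

instance (Arr : L → R → Type u) : Quiver.{u} (BipVert Arr) :=
  ⟨fun a b => bipHom Arr a b⟩

variable (Arr : L → R → Type u) (FL : L → Cat.{u, u}) (FR : R → Cat.{u, u})

/-- The fibrewise-opposite of the `Q`-shaped diagram of small categories. -/
def bipPrefunctorOp (Fmap : ∀ ⦃l : L⦄ ⦃r : R⦄, Arr l r → (FL l ⟶ FR r)) :
    Prefunctor (BipVert Arr) Cat.{u, u} where
  obj v := match v with
    | Sum.inl l => Cat.of (FL l)ᵒᵖ
    | Sum.inr r => Cat.of (FR r)ᵒᵖ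
  map {v w} a := match v, w, a with
    | Sum.inl _, Sum.inr _, a => (Functor.op (Fmap a).toFunctor).toCatHom
    | Sum.inl _, Sum.inl _, a => a.elim
    | Sum.inr _, Sum.inl _, a => a.elim
    | Sum.inr _, Sum.inr _, a => a.elim

/-- The contravariant Grothendieck construction `∫_contra F`: objects are pairs `(v, x)` with
`v ∈ Q₀` and `x ∈ F(v)`; morphisms `(v, x) → (v, x')` are morphisms `x → x'` in `F(v)`, and
morphisms `(r, y) → (l, x)` are pairs `(α : l → r, y → F(α)(x))`. It is realised as the
opposite of the covariant Grothendieck construction of the fibrewise-opposite diagram. -/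
abbrev ContraGroth (Fmap : ∀ ⦃l : L⦄ ⦃r : R⦄, Arr l r → (FL l ⟶ FR r)) : Type u :=
  (Grothendieck (Paths.lift (bipPrefunctorOp Arr FL FR Fmap)))ᵒᵖ

variable {Arr} in
/-- A `Q`-shaped diagram of posets, regarded as a diagram of small categories: the fibre over a
vertex `v` is the poset `F(v)` regarded as a category, and the monotone map `F(α)` attached to
an arrow `α : l → r` is regarded as a functor. -/
def posetDiagram {PL : L → Type u} [∀ l, PartialOrder (PL l)]
    {PR : R → Type u} [∀ r, PartialOrder (PR r)]
    (Fmap : ∀ ⦃l : L⦄ ⦃r : R⦄, Arr l r → (PL l →o PR r)) :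
    ∀ ⦃l : L⦄ ⦃r : R⦄, Arr l r → (Cat.of (PL l) ⟶ Cat.of (PR r)) :=
  fun _ _ α => (Fmap α).monotone.functor.toCatHom

end BGP

/-!
Every arrow of the bipartite quiver raises the level (`0` on `L`, `1` on `R`) by one, so a path
from `l ∈ L` to `r ∈ R` is a single arrow and every other path is trivial. The fibres are
posets, so a morphism of the Grothendieck construction is determined by its underlying path.
Hence only the hom-sets from `(r, y)` to `(l, x)` can have two elements, and two such morphisms
over arrows `α ≠ β` amount to `y` being a common lower bound of `F(α)(x)` and `F(β)(x)`.
-/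

theorem Quiver.isThin_op_iff {C : Type*} [Quiver C] : Quiver.IsThin Cᵒᵖ ↔ Quiver.IsThin C :=
  ⟨fun h a b => ⟨fun f g => Quiver.Hom.op_inj ((h (.op b) (.op a)).elim f.op g.op)⟩,
    fun h a b => ⟨fun f g => Quiver.Hom.unop_inj ((h b.unop a.unop).elim f.unop g.unop)⟩⟩

theorem Quiver.Hom.toPath_injective {V : Type*} [Quiver V] {a b : V} :
    Function.Injective (Quiver.Hom.toPath : (a ⟶ b) → Quiver.Path a b) :=
  fun _ _ h => eq_of_heq (Quiver.Path.hom_heq_of_cons_eq_cons h)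

namespace Quiver.Path

variable {V : Type*} [Quiver V] {a b : V}

theorem eq_of_length_eq_zero {p q : Path a b} (hp : p.length = 0) (hq : q.length = 0) :
    p = q := by
  obtain rfl := eq_of_length_zero p hp
  rw [eq_nil_of_length_zero p hp, eq_nil_of_length_zero q hq]

theorem exists_eq_toPath_of_length_eq_one (p : Path a b) (hp : p.length = 1) :
    ∃ e : a ⟶ b, p = e.toPath := by
  cases p with
  | nil => exact absurd hp zero_ne_one
  | cons q e =>
    obtain rfl := eq_of_length_zero q (Nat.succ_injective hp)
    rw [eq_nil_of_length_zero q (Nat.succ_injective hp)]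
    exact ⟨e, rfl⟩

end Quiver.Path

theorem CategoryTheory.Grothendieck.Hom.base_injective {C : Type*} [Category C] {F : C ⥤ Cat}
    [∀ c, Quiver.IsThin (F.obj c)] {X Y : Grothendieck F} :
    Function.Injective (Hom.base : (X ⟶ Y) → (X.base ⟶ Y.base)) :=
  fun f g h => Grothendieck.ext f g h (Subsingleton.elim _ _)

instance CategoryTheory.Cat.isThin_of_preorder (P : Type u) [Preorder P] :
    Quiver.IsThin (Cat.of P) :=
  inferInstanceAs (Quiver.IsThin P)

namespace BGP

variable {L R : Type u} {Arr : L → R → Type u}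

def BipVert.level : BipVert Arr → ℕ := Sum.elim (fun _ => 0) (fun _ => 1)

theorem BipVert.level_add_length {v w : BipVert Arr} (p : Quiver.Path v w) :
    level v + p.length = level w := by
  induction p with
  | nil => rfl
  | @cons b c p e ih =>
    obtain (l | r) := b <;> obtain (l' | r') := c
    case inl.inr => exact congrArg Nat.succ ih
    all_goals exact e.elim

-- The truncated subtraction is harmless: there are no paths from `R` to `L`.
theorem BipVert.length_eq_level_sub {v w : BipVert Arr} (p : Quiver.Path v w) :
    p.length = level w - level v := by
  rw [← level_add_length p, Nat.add_sub_cancel_left]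

-- An ascription `(.inl l : BipVert Arr)` would still elaborate in `L ⊕ R`, which has no quiver.
abbrev BipVert.arrow {l : L} {r : R} (α : Arr l r) :
    @Quiver.Hom (BipVert Arr) _ (.inl l) (.inr r) := α

instance isThin_bipPrefunctorOp_obj {FL : L → Cat.{u, u}} {FR : R → Cat.{u, u}}
    [∀ l, Quiver.IsThin (FL l)] [∀ r, Quiver.IsThin (FR r)]
    (Fmap : ∀ ⦃l : L⦄ ⦃r : R⦄, Arr l r → (FL l ⟶ FR r)) (v : Paths (BipVert Arr)) :
    Quiver.IsThin ((Paths.lift (bipPrefunctorOp Arr FL FR Fmap)).obj v) := by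
  obtain l | r := v <;> exact Quiver.isThin_op_iff.2 inferInstance

variable {PL : L → Type u} [∀ l, PartialOrder (PL l)] {PR : R → Type u} [∀ r, PartialOrder (PR r)]

abbrev PosetGroth (Fmap : ∀ ⦃l : L⦄ ⦃r : R⦄, Arr l r → (PL l →o PR r)) : Type u :=
  Grothendieck (Paths.lift (bipPrefunctorOp Arr (fun l => Cat.of (PL l)) (fun r => Cat.of (PR r))
    (posetDiagram Fmap)))

namespace PosetGroth

variable {Fmap : ∀ ⦃l : L⦄ ⦃r : R⦄, Arr l r → (PL l →o PR r)} {l : L} {r : R} {x : PL l}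
  {y : PR r}

def homOfLE (α : Arr l r) (h : y ≤ Fmap α x) :
    (⟨.inl l, .op x⟩ : PosetGroth Fmap) ⟶ ⟨.inr r, .op y⟩ :=
  ⟨(BipVert.arrow α).toPath, (CategoryTheory.homOfLE h).op⟩

theorem le_of_hom (f : (⟨.inl l, .op x⟩ : PosetGroth Fmap) ⟶ ⟨.inr r, .op y⟩) {α : Arr l r}
    (h : f.base = (BipVert.arrow α).toPath) : y ≤ Fmap α x := by
  obtain ⟨_, fiber⟩ := f
  subst h
  exact leOfHom fiber.unop

theorem subsingleton_hom_inl_inr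
    (hx : ∀ α β : Arr l r, α ≠ β → ¬∃ y : PR r, y ≤ Fmap α x ∧ y ≤ Fmap β x) :
    Subsingleton ((⟨.inl l, .op x⟩ : PosetGroth Fmap) ⟶ ⟨.inr r, .op y⟩) := by
  refine ⟨fun f g => Grothendieck.Hom.base_injective ?_⟩
  obtain ⟨α, hα⟩ := f.base.exists_eq_toPath_of_length_eq_one (BipVert.length_eq_level_sub _)
  obtain ⟨β, hβ⟩ := g.base.exists_eq_toPath_of_length_eq_one (BipVert.length_eq_level_sub _)
  obtain rfl : α = β := by_contra fun hne => hx α β hne ⟨y, le_of_hom f hα, le_of_hom g hβ⟩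
  rw [hα, hβ]

theorem isThin_iff :
    Quiver.IsThin (PosetGroth Fmap) ↔ ∀ (l : L) (r : R) (α β : Arr l r), α ≠ β →
      ∀ x : PL l, ¬∃ y : PR r, y ≤ Fmap α x ∧ y ≤ Fmap β x := by
  constructor
  · rintro h l r α β hne x ⟨y, hα, hβ⟩
    exact hne <| Quiver.Hom.toPath_injective <|
      congrArg Grothendieck.Hom.base ((h _ _).elim (homOfLE α hα) (homOfLE β hβ))
  · rintro h ⟨l | r, x⟩ ⟨l' | r', y⟩
    case inl.inr => exact subsingleton_hom_inl_inr (h l r' · · · x.unop)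
    all_goals exact ⟨fun f g => Grothendieck.Hom.base_injective <| Quiver.Path.eq_of_length_eq_zero
      (BipVert.length_eq_level_sub _) (BipVert.length_eq_level_sub _)⟩

end PosetGroth

end BGP

open BGP

theorem contraGroth_poset_iff_no_common_lower_bound_general
    {L R : Type u}
    (Arr : L → R → Type u)
    (PL : L → Type u) [∀ l, PartialOrder (PL l)]
    (PR : R → Type u) [∀ r, PartialOrder (PR r)]
    (Fmap : ∀ ⦃l : L⦄ ⦃r : R⦄, Arr l r → (PL l →o PR r)) :
    (∀ a b : ContraGroth Arr (fun l => Cat.of (PL l)) (fun r => Cat.of (PR r))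
        (posetDiagram Fmap), Subsingleton (a ⟶ b)) ↔
      (∀ (l : L) (r : R) (α β : Arr l r), α ≠ β → ∀ x : PL l,
        ¬∃ y : PR r, y ≤ Fmap α x ∧ y ≤ Fmap β x) :=
  Quiver.isThin_op_iff.trans PosetGroth.isThin_iff

/-- For a finite bipartite quiver `Q` with `Q₀ = L ⊔ R` and a `Q`-shaped diagram of posets `F`,
every Hom-set of `∫_contra F` has at most one element (i.e. `∫_contra F` is a poset) if and
only if for all distinct parallel arrows `α, β : l → r` of `Q` and every `x ∈ F(l)`, the
elements `F(α)(x)` and `F(β)(x)` have no common lower bound in `F(r)`. -/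
theorem contraGroth_poset_iff_no_common_lower_bound
    {L R : Type u} [Fintype L] [Fintype R]
    (Arr : L → R → Type u) [∀ l r, Fintype (Arr l r)]
    (PL : L → Type u) [∀ l, PartialOrder (PL l)]
    (PR : R → Type u) [∀ r, PartialOrder (PR r)]
    (Fmap : ∀ ⦃l : L⦄ ⦃r : R⦄, Arr l r → (PL l →o PR r)) :
    (∀ a b : ContraGroth Arr (fun l => Cat.of (PL l)) (fun r => Cat.of (PR r))
        (posetDiagram Fmap), Subsingleton (a ⟶ b)) ↔
      (∀ (l : L) (r : R) (α β : Arr l r), α ≠ β → ∀ x : PL l,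
        ¬∃ y : PR r, y ≤ Fmap α x ∧ y ≤ Fmap β x) :=
  contraGroth_poset_iff_no_common_lower_bound_general Arr PL PR Fmap
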